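/- For each set T of regular constraints over Σ̄, each initial structure D₀ over Σ̄, and each final position H ∈ Ω(T, D₀), it holds that H ⊨ T, i.e. every regular constraint in T is satisfied in H. -/
import Mathlib


/-- A graph database (structure) over vertex type `V` and edge-label alphabet `γ`:
`D x c y` means that there is an edge from `x` to `y` labeled with `c`. -/
def DB (V γ : Type) : Type := V → γ → V → Prop

/-- `pathSat D x w y` : the structure `D` satisfies `w(x,y)`, i.e. there is a directed
path from `x` to `y` whose consecutive edge labels spell the word `w`. -/
def pathSat {V γ : Type} (D : DB V γ) : V → List γ → V → Prop
  | x, [], y => x = y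
  | x, c :: w, y => ∃ z, D x c z ∧ pathSat D z w y

/-- `D ⊨ L(x,y)` for a language `L` : some word of `L` labels a path from `x` to `y`. -/
def langSat {V γ : Type} (D : DB V γ) (L : Language γ) (x y : V) : Prop :=
  ∃ w ∈ L, pathSat D x w y

/-- The answer `L(D)` of the path query given by the language `L` on the database `D`. -/
def qry {V γ : Type} (L : Language γ) (D : DB V γ) : Set (V × V) :=
  { p | langSat D L p.1 p.2 }

/-- All edge labels of `D` lie in the set `A`. -/
def labelsIn {V γ : Type} (D : DB V γ) (A : Set γ) : Prop :=
  ∀ x c y, D x c y → c ∈ A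

/-- A language is regular iff it is the language of some regular expression. -/
def IsRegularLang {γ : Type} (L : Language γ) : Prop :=
  ∃ r : RegularExpression γ, r.matches' = L

/-! ### Red-green signature.  A letter of `Σ̄` is a pair `(color, a)` with
`color = true` meaning green and `color = false` meaning red. -/

/-- The green copy `G(w)` of a word `w`. -/
def greenW {γ : Type} (w : List γ) : List (Bool × γ) := w.map (fun c => (true, c))

/-- The red copy `R(w)` of a word `w`. -/
def redW {γ : Type} (w : List γ) : List (Bool × γ) := w.map (fun c => (false, c))

/-- The green copy `G(L)` of a language `L`. -/
def greenL {γ : Type} (L : Language γ) : Language (Bool × γ) := greenW '' L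

/-- The red copy `R(L)` of a language `L`. -/
def redL {γ : Type} (L : Language γ) : Language (Bool × γ) := redW '' L

/-- A constraint `L → L'` given by a pair of languages,
meaning `∀ x y, L(x,y) ⇒ L'(x,y)`. -/
structure RCon (γ : Type) where
  lhs : Language γ
  rhs : Language γ

/-- `D ⊨ t` for a single constraint `t`. -/
def satRC {V γ : Type} (D : DB V γ) (t : RCon γ) : Prop :=
  ∀ x y, langSat D t.lhs x y → langSat D t.rhs x y

/-- `D ⊨ T` for a set `T` of constraints. -/
def satRCs {V γ : Type} (D : DB V γ) (T : Set (RCon γ)) : Prop :=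
  ∀ t ∈ T, satRC D t

/-- `L→`, the regular constraint `G(L) → R(L)`. -/
def rcFwd {γ : Type} (L : Language γ) : RCon (Bool × γ) := ⟨greenL L, redL L⟩

/-- `L←`, the regular constraint `R(L) → G(L)`. -/
def rcBwd {γ : Type} (L : Language γ) : RCon (Bool × γ) := ⟨redL L, greenL L⟩

/-- `𝒬↔ = ⋃_{L ∈ 𝒬} {L→, L←}`. -/
def biRC {γ : Type} (Qs : Set (Language γ)) : Set (RCon (Bool × γ)) :=
  rcFwd '' Qs ∪ rcBwd '' Qs

/-- A request is a triple `⟨x, y, t⟩`. -/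
abbrev Req (V γ : Type) := V × V × RCon γ

/-- `rq T D` : the set of requests `⟨x,y,L→L'⟩` with `L → L' ∈ T`, `D ⊨ L(x,y)`
and `D ⊭ L'(x,y)`. -/
def rq {V γ : Type} (T : Set (RCon γ)) (D : DB V γ) : Set (Req V γ) :=
  { r | r.2.2 ∈ T ∧ langSat D r.2.2.lhs r.1 r.2.1 ∧ ¬ langSat D r.2.2.rhs r.1 r.2.1 }

/-- A vertex of (i.e. active in) the structure `D`. -/
def activeV {V γ : Type} (D : DB V γ) (v : V) : Prop :=
  ∃ c u, D v c u ∨ D u c v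

/-- The edge set of a chain whose consecutive vertices are listed in the first argument
and whose edge labels spell the second argument.  -/
def chainOf {V γ : Type} : List V → List γ → DB V γ
  | u :: v :: vs, c :: w => fun p d q => (p = u ∧ d = c ∧ q = v) ∨ chainOf (v :: vs) w p d q
  | _, _ => fun _ _ _ => False

/-- `D` is (exactly) the chain structure `w[x,y]` : its edges form a chain from `x` to `y`
labeled `w`, whose internal vertices are pairwise distinct and distinct from `x, y`. -/
def IsChainStruct {V γ : Type} (D : DB V γ) (x : V) (w : List γ) (y : V) : Prop :=
  ∃ vs : List V, vs.length + 1 = w.length ∧ (x :: vs ++ [y]).Nodup ∧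
    ∀ p c q, D p c q ↔ chainOf (x :: vs ++ [y]) w p c q

/-- `Step T D D'` : `D'` is obtained from `D` by simultaneously satisfying every request of
`rq T D` : for each request `⟨x,y,t⟩` a word `w` of the right-hand side of `t` is chosen and a
fresh path `w[x,y]` is added, the internal vertices of all the added paths being new
(not vertices of `D`) and pairwise distinct. -/
def Step {V γ : Type} (T : Set (RCon γ)) (D D' : DB V γ) : Prop :=
  ∃ (wch : Req V γ → List γ) (vch : Req V γ → List V),
    (∀ r ∈ rq T D,
      wch r ∈ (r.2.2).rhs ∧ (vch r).length + 1 = (wch r).length ∧ (vch r).Nodup ∧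
      ∀ v ∈ vch r, ¬ activeV D v ∧ v ≠ r.1 ∧ v ≠ r.2.1) ∧
    (∀ r ∈ rq T D, ∀ r' ∈ rq T D, r ≠ r' → ∀ v ∈ vch r, v ∉ vch r') ∧
    ∀ p c q, D' p c q ↔
      (D p c q ∨ ∃ r ∈ rq T D, chainOf (r.1 :: vch r ++ [r.2.1]) (wch r) p c q)

/-- `H ∈ Ω(T, D₀)` : `H` is a final position, namely the union of a play
`D₀, D₁, D₂, …` with `Step T Dᵢ Dᵢ₊₁` for all `i`. -/
def FinalPos {V γ : Type} (T : Set (RCon γ)) (D₀ H : DB V γ) : Prop :=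
  ∃ seq : ℕ → DB V γ, seq 0 = D₀ ∧ (∀ i, Step T (seq i) (seq (i + 1))) ∧
    ∀ p c q, H p c q ↔ ∃ i, seq i p c q

/-- `h` is a homomorphism from `D` to `M`. -/
def IsHom {V W γ : Type} (D : DB V γ) (M : DB W γ) (h : V → W) : Prop :=
  ∀ x c y, D x c y → M (h x) c (h y)

lemma pathSat_mono {V γ : Type} {D D' : DB V γ} (h : ∀ p c q, D p c q → D' p c q) :
    ∀ (w : List γ) (x y : V), pathSat D x w y → pathSat D' x w y := by
  intro w
  induction w with
  | nil => intro x y hx; exact hx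
  | cons c w ih =>
    rintro x y ⟨z, hz, hp⟩
    exact ⟨z, h _ _ _ hz, ih z y hp⟩

lemma chain_path {V γ : Type} :
    ∀ (w : List γ) (vs : List V) (x y : V) (D : DB V γ),
      vs.length + 1 = w.length →
      (∀ p c q, chainOf (x :: (vs ++ [y])) w p c q → D p c q) →
      pathSat D x w y := by
  intro w
  induction w with
  | nil => intro vs x y D hlen; simp at hlen
  | cons c w ih =>
    intro vs x y D hlen hsub
    cases vs with
    | nil =>
      simp at hlen
      have hw : w = [] := by
        cases w with
        | nil => rfl
        | cons a l => simp at hlen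
      subst hw
      exact ⟨y, hsub x c y (Or.inl ⟨rfl, rfl, rfl⟩), rfl⟩
    | cons v vs' =>
      simp at hlen
      refine ⟨v, hsub x c v (Or.inl ⟨rfl, rfl, rfl⟩), ?_⟩
      exact ih vs' v y D (by omega) (fun p d q hpq => hsub p d q (Or.inr hpq))

lemma step_mono {V γ : Type} {T : Set (RCon γ)} {D D' : DB V γ} (h : Step T D D') :
    ∀ p c q, D p c q → D' p c q := by
  obtain ⟨wch, vch, _, _, hiff⟩ := h
  intro p c q hpq
  exact (hiff p c q).2 (Or.inl hpq)

/-- Every final position `H ∈ Ω(T, D₀)` satisfies all the regular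
constraints of `T`. -/
theorem finalPos_satisfies_RCs {γ V : Type} (T : Set (RCon (Bool × γ)))
    (hreg : ∀ t ∈ T, IsRegularLang t.lhs ∧ IsRegularLang t.rhs)
    (D₀ H : DB V (Bool × γ)) (hH : FinalPos T D₀ H) :
    satRCs H T := by
  obtain ⟨seq, hseq0, hstep, hHiff⟩ := hH
  -- monotonicity of the sequence
  have hmono : ∀ i j, i ≤ j → ∀ p c q, seq i p c q → seq j p c q := by
    intro i j hij
    induction j with
    | zero =>
      have : i = 0 := Nat.le_zero.mp hij
      subst this; intro p c q h; exact h
    | succ j ihj =>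
      intro p c q h
      rcases Nat.le_succ_iff.mp hij with h' | h'
      · exact step_mono (hstep j) p c q (ihj h' p c q h)
      · subst h'; exact h
  have hseqH : ∀ i p c q, seq i p c q → H p c q := fun i p c q h =>
    (hHiff p c q).2 ⟨i, h⟩
  -- every path of H lives in some seq i
  have hpath : ∀ (w : List (Bool × γ)) (x y : V), pathSat H x w y →
      ∃ i, pathSat (seq i) x w y := by
    intro w
    induction w with
    | nil => intro x y h; exact ⟨0, h⟩
    | cons c w ih =>
      rintro x y ⟨z, hz, hp⟩
      obtain ⟨i₁, hi₁⟩ := (hHiff x c z).1 hz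
      obtain ⟨i₂, hi₂⟩ := ih z y hp
      refine ⟨max i₁ i₂, z, hmono i₁ _ (le_max_left _ _) _ _ _ hi₁, ?_⟩
      exact pathSat_mono (hmono i₂ _ (le_max_right _ _)) w z y hi₂
  intro t ht x y hlhs
  by_contra hrhs
  obtain ⟨w, hwL, hwp⟩ := hlhs
  obtain ⟨i, hip⟩ := hpath w x y hwp
  have hnot : ¬ langSat (seq i) t.rhs x y := by
    rintro ⟨w', hw', hp'⟩
    exact hrhs ⟨w', hw', pathSat_mono (hseqH i) w' x y hp'⟩
  have hr : ((x, y, t) : Req V (Bool × γ)) ∈ rq T (seq i) :=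
    ⟨ht, ⟨w, hwL, hip⟩, hnot⟩
  obtain ⟨wch, vch, hch, _, hiff⟩ := hstep i
  obtain ⟨hwmem, hlen, _, _⟩ := hch _ hr
  have hsub : ∀ p c q, chainOf (x :: (vch (x, y, t) ++ [y])) (wch (x, y, t)) p c q →
      seq (i + 1) p c q := by
    intro p c q hpq
    exact (hiff p c q).2 (Or.inr ⟨(x, y, t), hr, hpq⟩)
  have : pathSat (seq (i + 1)) x (wch (x, y, t)) y :=
    chain_path _ _ _ _ _ hlen hsub
  exact hrhs ⟨wch (x, y, t), hwmem,
    pathSat_mono (hseqH (i + 1)) _ x y this⟩
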